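/- arXiv:1601.04703 — 5 statements merged into one kernel-verified Lean document; each statement's English description precedes it below -/
import Mathlib

section
/- For real s₁, s₂ > 1, the Euler reflection (quasi-shuffle) formula holds: ζ(s₁)·ζ(s₂) = ζ(s₁,s₂) + ζ(s₂,s₁) + ζ(s₁+s₂), where ζ(s₁,s₂) = ∑_{0<n₂<n₁} n₁^{−s₁} n₂^{−s₂}. -/
/-- Riemann zeta series for real arguments. -/
noncomputable def zetaR (s : ℝ) : ℝ := ∑' n : ℕ, (1 : ℝ) / ((n : ℝ) + 1) ^ s

/-- Double zeta value `ζ(s₁, s₂) = ∑_{0 < n₂ < n₁} n₁^{-s₁} n₂^{-s₂}`. -/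
noncomputable def doubleZeta (s₁ s₂ : ℝ) : ℝ :=
  ∑' p : {p : ℕ × ℕ // 0 < p.2 ∧ p.2 < p.1},
    (1 : ℝ) / (((p : ℕ × ℕ).1 : ℝ) ^ s₁ * ((p : ℕ × ℕ).2 : ℝ) ^ s₂)

/-!
Expand `ζ(s₁) ζ(s₂)` as an absolutely convergent double series over `ℕ × ℕ` and split the
index set by trichotomy: the two off-diagonal triangles give `ζ(s₁, s₂)` and `ζ(s₂, s₁)`, and on
the diagonal `n^{-s₁} n^{-s₂} = n^{-(s₁ + s₂)}` gives `ζ(s₁ + s₂)`.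
-/

theorem Summable.tsum_prod_eq_snd_lt_fst_add_fst_lt_snd_add_diag {α E : Type*} [LinearOrder α]
    [AddCommGroup E] [UniformSpace E] [IsUniformAddGroup E] [CompleteSpace E] [T2Space E]
    {F : α × α → E} (hF : Summable F) :
    ∑' q, F q = ∑' q : {q : α × α | q.2 < q.1}, F q + ∑' q : {q : α × α | q.1 < q.2}, F q
      + ∑' a, F (a, a) := by
  have hdiag : ∑' a, F (a, a) = ∑' q : Set.diagonal α, F q := by
    rw [← Set.range_diag, tsum_range F Function.diag_injective]; rfl
  have hsplit : F = {q : α × α | q.2 < q.1}.indicator F + {q : α × α | q.1 < q.2}.indicator F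
      + (Set.diagonal α).indicator F := by
    ext ⟨a, b⟩
    rcases lt_trichotomy a b with h | rfl | h
    · simp [Set.indicator, h, h.not_gt, h.ne]
    · simp [Set.indicator]
    · simp [Set.indicator, h, h.not_gt, h.ne']
  rw [hdiag, tsum_subtype, tsum_subtype, tsum_subtype,
    ← (hF.indicator _).tsum_add (hF.indicator _),
    ← ((hF.indicator _).add (hF.indicator _)).tsum_add (hF.indicator _)]
  exact congrArg tsum hsplit

theorem tsum_fst_lt_snd_eq_tsum_snd_lt_fst_swap {α E : Type*} [LinearOrder α] [AddCommMonoid E]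
    [TopologicalSpace E] (F : α × α → E) :
    ∑' q : {q : α × α | q.1 < q.2}, F q = ∑' q : {q : α × α | q.2 < q.1}, F q.1.swap :=
  let e : {q : α × α | q.2 < q.1} ≃ {q : α × α | q.1 < q.2} :=
    (Equiv.prodComm α α).subtypeEquiv fun _ => Iff.rfl
  (e.tsum_eq fun q => F q).symm

theorem summable_one_div_nat_add_one_rpow {s : ℝ} (hs : 1 < s) :
    Summable fun n : ℕ => 1 / ((n : ℝ) + 1) ^ s :=
  ((Real.summable_one_div_nat_add_rpow 1 s).2 hs).congr fun n => by
    rw [abs_of_pos (by positivity)]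

def shiftLowerTriangle : {q : ℕ × ℕ | q.2 < q.1} ≃ {p : ℕ × ℕ // 0 < p.2 ∧ p.2 < p.1} where
  toFun q := ⟨(q.1.1 + 1, q.1.2 + 1), Nat.succ_pos _, Nat.succ_lt_succ q.2⟩
  invFun p := ⟨(p.1.1 - 1, p.1.2 - 1), by simp; omega⟩
  left_inv q := by simp
  right_inv p := by obtain ⟨⟨a, b⟩, h⟩ := p; simp at h ⊢; omega

theorem tsum_snd_lt_fst_shift_eq_doubleZeta (s₁ s₂ : ℝ) :
    ∑' q : {q : ℕ × ℕ | q.2 < q.1}, 1 / ((q.1.1 : ℝ) + 1) ^ s₁ * (1 / ((q.1.2 : ℝ) + 1) ^ s₂)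
      = doubleZeta s₁ s₂ := by
  rw [doubleZeta, ← shiftLowerTriangle.tsum_eq]
  simp [shiftLowerTriangle, mul_comm]

theorem tsum_fst_lt_snd_shift_eq_doubleZeta (s₁ s₂ : ℝ) :
    ∑' q : {q : ℕ × ℕ | q.1 < q.2}, 1 / ((q.1.1 : ℝ) + 1) ^ s₁ * (1 / ((q.1.2 : ℝ) + 1) ^ s₂)
      = doubleZeta s₂ s₁ := by
  rw [tsum_fst_lt_snd_eq_tsum_snd_lt_fst_swap
      (fun q : ℕ × ℕ => 1 / ((q.1 : ℝ) + 1) ^ s₁ * (1 / ((q.2 : ℝ) + 1) ^ s₂)),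
    ← tsum_snd_lt_fst_shift_eq_doubleZeta]
  simp only [Prod.fst_swap, Prod.snd_swap, mul_comm]

theorem stmt_4 (s₁ s₂ : ℝ) (h₁ : 1 < s₁) (h₂ : 1 < s₂) :
    zetaR s₁ * zetaR s₂ = doubleZeta s₁ s₂ + doubleZeta s₂ s₁ + zetaR (s₁ + s₂) := by
  have hf := summable_one_div_nat_add_one_rpow h₁
  have hg := summable_one_div_nat_add_one_rpow h₂
  have hfg := hf.mul_of_nonneg hg (fun _ => by positivity) (fun _ => by positivity)
  have hdiag : ∑' n : ℕ, 1 / ((n : ℝ) + 1) ^ s₁ * (1 / ((n : ℝ) + 1) ^ s₂) = zetaR (s₁ + s₂) := by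
    refine tsum_congr fun n => ?_
    rw [Real.rpow_add (by positivity)]
    ring
  rw [zetaR, zetaR, hf.tsum_mul_tsum hg hfg, hfg.tsum_prod_eq_snd_lt_fst_add_fst_lt_snd_add_diag,
    tsum_snd_lt_fst_shift_eq_doubleZeta, tsum_fst_lt_snd_shift_eq_doubleZeta, ← hdiag]
end

section
/- For real s₁, s₂, s₃ > 1, ζ(s₁)ζ(s₂)ζ(s₃) equals the sum of ζ(s_{σ(1)}, s_{σ(2)}, s_{σ(3)}) over all six permutations σ of {1,2,3}, plus ζ(s₁)ζ(s₂+s₃) + ζ(s₂)ζ(s₁+s₃) + ζ(s₃)ζ(s₁+s₂), minus 2·ζ(s₁+s₂+s₃). -/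
/-- Triple zeta value `ζ(a,b,c) = ∑_{0 < n₃ < n₂ < n₁} n₁^{-a} n₂^{-b} n₃^{-c}`. -/
noncomputable def tripleZeta (a b c : ℝ) : ℝ :=
  ∑' p : {p : ℕ × ℕ × ℕ // 0 < p.2.2 ∧ p.2.2 < p.2.1 ∧ p.2.1 < p.1},
    (1 : ℝ) / (((p : ℕ × ℕ × ℕ).1 : ℝ) ^ a * ((p : ℕ × ℕ × ℕ).2.1 : ℝ) ^ b
      * ((p : ℕ × ℕ × ℕ).2.2 : ℝ) ^ c)

open scoped ENNReal

noncomputable def fE (s : ℝ) (n : ℕ) : ℝ≥0∞ := if n = 0 then 0 else ENNReal.ofReal (1 / (n:ℝ)^s)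

lemma fE_zero (s : ℝ) : fE s 0 = 0 := rfl

lemma fE_mul (s t : ℝ) (n : ℕ) : fE s n * fE t n = fE (s+t) n := by
  rcases Nat.eq_zero_or_pos n with h | h
  · simp [fE, h]
  · have hn : (0:ℝ) < n := by exact_mod_cast h
    simp only [fE, Nat.pos_iff_ne_zero.mp h, if_false]
    rw [← ENNReal.ofReal_mul (by positivity), Real.rpow_add hn]
    rw [one_div_mul_one_div]

noncomputable def ZE (s : ℝ) : ℝ≥0∞ := ∑' n : ℕ, fE s n

lemma summable_shift (s : ℝ) (hs : 1 < s) : Summable (fun n : ℕ => (1:ℝ) / ((n:ℝ)+1)^s) := by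
  have := (Real.summable_one_div_nat_rpow (p := s)).mpr hs
  have h2 := (summable_nat_add_iff 1).mpr this
  refine h2.congr fun n => ?_
  push_cast
  ring_nf

lemma ZE_eq (s : ℝ) (hs : 1 < s) : ZE s = ENNReal.ofReal (zetaR s) := by
  have h0 : ZE s = ∑' n : ℕ, fE s (n+1) := by
    rw [ZE, tsum_eq_zero_add' ENNReal.summable, fE_zero, zero_add]
  have hof := ENNReal.ofReal_tsum_of_nonneg (f := fun n : ℕ => (1:ℝ) / ((n:ℝ)+1)^s)
    (fun n => by positivity) (summable_shift s hs)
  rw [h0]; unfold zetaR; rw [hof]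
  refine tsum_congr fun n => ?_
  simp [fE]

lemma ZE_ne_top (s : ℝ) (hs : 1 < s) : ZE s ≠ ⊤ := by rw [ZE_eq s hs]; exact ENNReal.ofReal_ne_top

lemma ZE_toReal (s : ℝ) (hs : 1 < s) : (ZE s).toReal = zetaR s := by
  rw [ZE_eq s hs, ENNReal.toReal_ofReal]
  exact tsum_nonneg fun n => by positivity

noncomputable def DE (x y : ℝ) : ℝ≥0∞ :=
  ∑' q : {q : ℕ × ℕ // 0 < q.2 ∧ q.2 < q.1}, fE x q.1.1 * fE y q.1.2

def eSwap : {q : ℕ × ℕ // 0 < q.2 ∧ q.2 < q.1} ≃ ↥{q : ℕ × ℕ | 0 < q.1 ∧ q.1 < q.2} where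
  toFun q := ⟨(q.1.2, q.1.1), q.2.1, q.2.2⟩
  invFun q := ⟨(q.1.2, q.1.1), q.2.1, q.2.2⟩
  left_inv q := rfl
  right_inv q := rfl

def eDiag : ℕ ≃ ↥{q : ℕ × ℕ | q.1 = q.2} where
  toFun n := ⟨(n, n), rfl⟩
  invFun q := q.1.1
  left_inv n := rfl
  right_inv q := Subtype.ext (Prod.ext rfl q.2)

lemma pair_reflect (x y : ℝ) : ZE x * ZE y = DE x y + DE y x + ZE (x+y) := by
  classical
  have hprod : ZE x * ZE y = ∑' q : ℕ × ℕ, fE x q.1 * fE y q.2 := by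
    rw [ENNReal.tsum_prod']
    simp only [ENNReal.tsum_mul_left, ENNReal.tsum_mul_right]
    rfl
  have hpt : ∀ q : ℕ × ℕ, fE x q.1 * fE y q.2 =
      ({q : ℕ × ℕ | 0 < q.2 ∧ q.2 < q.1}.indicator (fun q => fE x q.1 * fE y q.2) q)
      + ({q : ℕ × ℕ | 0 < q.1 ∧ q.1 < q.2}.indicator (fun q => fE x q.1 * fE y q.2) q)
      + ({q : ℕ × ℕ | q.1 = q.2}.indicator (fun q => fE x q.1 * fE y q.2) q) := by
    rintro ⟨a, b⟩
    simp only [Set.indicator_apply, Set.mem_setOf_eq]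
    split_ifs <;>
      first
        | (exfalso; omega)
        | ((have h0 : a = 0 ∨ b = 0 := by omega);
            rcases h0 with rfl | rfl <;> simp [fE_zero])
        | simp
  have hsplit : ∑' q : ℕ × ℕ, fE x q.1 * fE y q.2 =
      (∑' q : {q : ℕ × ℕ | 0 < q.2 ∧ q.2 < q.1}, fE x q.1.1 * fE y q.1.2)
      + (∑' q : {q : ℕ × ℕ | 0 < q.1 ∧ q.1 < q.2}, fE x q.1.1 * fE y q.1.2)
      + (∑' q : {q : ℕ × ℕ | q.1 = q.2}, fE x q.1.1 * fE y q.1.2) := by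
    rw [tsum_subtype {q : ℕ × ℕ | 0 < q.2 ∧ q.2 < q.1} (fun q => fE x q.1 * fE y q.2),
      tsum_subtype {q : ℕ × ℕ | 0 < q.1 ∧ q.1 < q.2} (fun q => fE x q.1 * fE y q.2),
      tsum_subtype {q : ℕ × ℕ | q.1 = q.2} (fun q => fE x q.1 * fE y q.2),
      ← ENNReal.tsum_add, ← ENNReal.tsum_add]
    exact tsum_congr hpt
  have hBeq : (∑' q : {q : ℕ × ℕ | 0 < q.1 ∧ q.1 < q.2}, fE x q.1.1 * fE y q.1.2) = DE y x := by
    rw [DE, ← Equiv.tsum_eq eSwap (fun q : {q : ℕ × ℕ | 0 < q.1 ∧ q.1 < q.2} => fE x q.1.1 * fE y q.1.2)]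
    exact tsum_congr fun q => mul_comm _ _
  have hCeq : (∑' q : {q : ℕ × ℕ | q.1 = q.2}, fE x q.1.1 * fE y q.1.2) = ZE (x+y) := by
    rw [ZE, ← Equiv.tsum_eq eDiag (fun q : {q : ℕ × ℕ | q.1 = q.2} => fE x q.1.1 * fE y q.1.2)]
    exact tsum_congr fun n => fE_mul x y n
  rw [hprod, hsplit, hBeq, hCeq]
  rfl

noncomputable def TE (a b c : ℝ) : ℝ≥0∞ :=
  ∑' p : {p : ℕ × ℕ × ℕ // 0 < p.2.2 ∧ p.2.2 < p.2.1 ∧ p.2.1 < p.1},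
    fE a p.1.1 * fE b p.1.2.1 * fE c p.1.2.2

abbrev Psub := {q : ℕ × ℕ // 0 < q.2 ∧ q.2 < q.1}
abbrev Tsub := {p : ℕ × ℕ × ℕ // 0 < p.2.2 ∧ p.2.2 < p.2.1 ∧ p.2.1 < p.1}
abbrev MixT := ℕ × Psub

def eR1 : Tsub ≃ ↥{p : MixT | p.2.1.1 < p.1} where
  toFun t := ⟨(t.1.1, ⟨(t.1.2.1, t.1.2.2), t.2.1, t.2.2.1⟩), t.2.2.2⟩
  invFun p := ⟨(p.1.1, p.1.2.1.1, p.1.2.1.2), p.1.2.2.1, p.1.2.2.2, p.2⟩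
  left_inv t := rfl
  right_inv p := rfl

def eR2 : Psub ≃ ↥{p : MixT | p.1 = p.2.1.1} where
  toFun q := ⟨(q.1.1, q), rfl⟩
  invFun p := p.1.2
  left_inv q := rfl
  right_inv p := Subtype.ext (Prod.ext p.2.symm rfl)

def eR3 : Tsub ≃ ↥{p : MixT | p.2.1.2 < p.1 ∧ p.1 < p.2.1.1} where
  toFun t := ⟨(t.1.2.1, ⟨(t.1.1, t.1.2.2), t.2.1, lt_trans t.2.2.1 t.2.2.2⟩), t.2.2.1, t.2.2.2⟩
  invFun p := ⟨(p.1.2.1.1, p.1.1, p.1.2.1.2), p.1.2.2.1, p.2.1, p.2.2⟩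
  left_inv t := rfl
  right_inv p := rfl

def eR4 : Psub ≃ ↥{p : MixT | p.1 = p.2.1.2} where
  toFun q := ⟨(q.1.2, q), rfl⟩
  invFun p := p.1.2
  left_inv q := rfl
  right_inv p := Subtype.ext (Prod.ext p.2.symm rfl)

def eR5 : Tsub ≃ ↥{p : MixT | 0 < p.1 ∧ p.1 < p.2.1.2} where
  toFun t := ⟨(t.1.2.2, ⟨(t.1.1, t.1.2.1), lt_trans t.2.1 t.2.2.1, t.2.2.2⟩), t.2.1, t.2.2.1⟩
  invFun p := ⟨(p.1.2.1.1, p.1.2.1.2, p.1.1), p.2.1, p.2.2, p.1.2.2.2⟩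
  left_inv t := rfl
  right_inv p := rfl

lemma mixed (x y z : ℝ) :
    ZE x * DE y z = TE x y z + TE y x z + TE y z x + DE (x+y) z + DE y (x+z) := by
  classical
  have hprod : ZE x * DE y z =
      ∑' p : MixT, fE x p.1 * (fE y p.2.1.1 * fE z p.2.1.2) := by
    rw [ENNReal.tsum_prod']
    simp only [ENNReal.tsum_mul_left, ENNReal.tsum_mul_right]
    rfl
  have hpt : ∀ p : MixT, fE x p.1 * (fE y p.2.1.1 * fE z p.2.1.2) =
      ({p : MixT | p.2.1.1 < p.1}.indicator (fun p => fE x p.1 * (fE y p.2.1.1 * fE z p.2.1.2)) p)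
      + ({p : MixT | p.1 = p.2.1.1}.indicator (fun p => fE x p.1 * (fE y p.2.1.1 * fE z p.2.1.2)) p)
      + ({p : MixT | p.2.1.2 < p.1 ∧ p.1 < p.2.1.1}.indicator (fun p => fE x p.1 * (fE y p.2.1.1 * fE z p.2.1.2)) p)
      + ({p : MixT | p.1 = p.2.1.2}.indicator (fun p => fE x p.1 * (fE y p.2.1.1 * fE z p.2.1.2)) p)
      + ({p : MixT | 0 < p.1 ∧ p.1 < p.2.1.2}.indicator (fun p => fE x p.1 * (fE y p.2.1.1 * fE z p.2.1.2)) p) := by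
    rintro ⟨a, ⟨⟨m, n⟩, hn, hnm⟩⟩
    simp only [Set.indicator_apply, Set.mem_setOf_eq]
    split_ifs <;>
      first
        | (exfalso; omega)
        | ((have h0 : a = 0 := by omega); subst h0; simp [fE_zero])
        | simp
  have hsplit : (∑' p : MixT, fE x p.1 * (fE y p.2.1.1 * fE z p.2.1.2)) =
      (∑' p : {p : MixT | p.2.1.1 < p.1}, fE x p.1.1 * (fE y p.1.2.1.1 * fE z p.1.2.1.2))
      + (∑' p : {p : MixT | p.1 = p.2.1.1}, fE x p.1.1 * (fE y p.1.2.1.1 * fE z p.1.2.1.2))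
      + (∑' p : {p : MixT | p.2.1.2 < p.1 ∧ p.1 < p.2.1.1}, fE x p.1.1 * (fE y p.1.2.1.1 * fE z p.1.2.1.2))
      + (∑' p : {p : MixT | p.1 = p.2.1.2}, fE x p.1.1 * (fE y p.1.2.1.1 * fE z p.1.2.1.2))
      + (∑' p : {p : MixT | 0 < p.1 ∧ p.1 < p.2.1.2}, fE x p.1.1 * (fE y p.1.2.1.1 * fE z p.1.2.1.2)) := by
    rw [tsum_subtype {p : MixT | p.2.1.1 < p.1} (fun p => fE x p.1 * (fE y p.2.1.1 * fE z p.2.1.2)),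
      tsum_subtype {p : MixT | p.1 = p.2.1.1} (fun p => fE x p.1 * (fE y p.2.1.1 * fE z p.2.1.2)),
      tsum_subtype {p : MixT | p.2.1.2 < p.1 ∧ p.1 < p.2.1.1} (fun p => fE x p.1 * (fE y p.2.1.1 * fE z p.2.1.2)),
      tsum_subtype {p : MixT | p.1 = p.2.1.2} (fun p => fE x p.1 * (fE y p.2.1.1 * fE z p.2.1.2)),
      tsum_subtype {p : MixT | 0 < p.1 ∧ p.1 < p.2.1.2} (fun p => fE x p.1 * (fE y p.2.1.1 * fE z p.2.1.2)),
      ← ENNReal.tsum_add, ← ENNReal.tsum_add, ← ENNReal.tsum_add, ← ENNReal.tsum_add]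
    exact tsum_congr hpt
  have h1 : (∑' p : {p : MixT | p.2.1.1 < p.1}, fE x p.1.1 * (fE y p.1.2.1.1 * fE z p.1.2.1.2))
      = TE x y z := by
    rw [TE, ← Equiv.tsum_eq eR1 (fun p : {p : MixT | p.2.1.1 < p.1} =>
      fE x p.1.1 * (fE y p.1.2.1.1 * fE z p.1.2.1.2))]
    exact tsum_congr fun t => (mul_assoc _ _ _).symm
  have h2 : (∑' p : {p : MixT | p.1 = p.2.1.1}, fE x p.1.1 * (fE y p.1.2.1.1 * fE z p.1.2.1.2))
      = DE (x+y) z := by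
    rw [DE, ← Equiv.tsum_eq eR2 (fun p : {p : MixT | p.1 = p.2.1.1} =>
      fE x p.1.1 * (fE y p.1.2.1.1 * fE z p.1.2.1.2))]
    refine tsum_congr fun q => ?_
    show fE x q.1.1 * (fE y q.1.1 * fE z q.1.2) = fE (x+y) q.1.1 * fE z q.1.2
    rw [← mul_assoc, fE_mul]
  have h3 : (∑' p : {p : MixT | p.2.1.2 < p.1 ∧ p.1 < p.2.1.1},
        fE x p.1.1 * (fE y p.1.2.1.1 * fE z p.1.2.1.2)) = TE y x z := by
    rw [TE, ← Equiv.tsum_eq eR3 (fun p : {p : MixT | p.2.1.2 < p.1 ∧ p.1 < p.2.1.1} =>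
      fE x p.1.1 * (fE y p.1.2.1.1 * fE z p.1.2.1.2))]
    refine tsum_congr fun t => ?_
    show fE x t.1.2.1 * (fE y t.1.1 * fE z t.1.2.2) = fE y t.1.1 * fE x t.1.2.1 * fE z t.1.2.2
    ring
  have h4 : (∑' p : {p : MixT | p.1 = p.2.1.2}, fE x p.1.1 * (fE y p.1.2.1.1 * fE z p.1.2.1.2))
      = DE y (x+z) := by
    rw [DE, ← Equiv.tsum_eq eR4 (fun p : {p : MixT | p.1 = p.2.1.2} =>
      fE x p.1.1 * (fE y p.1.2.1.1 * fE z p.1.2.1.2))]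
    refine tsum_congr fun q => ?_
    show fE x q.1.2 * (fE y q.1.1 * fE z q.1.2) = fE y q.1.1 * fE (x+z) q.1.2
    rw [mul_left_comm, fE_mul]
  have h5 : (∑' p : {p : MixT | 0 < p.1 ∧ p.1 < p.2.1.2},
        fE x p.1.1 * (fE y p.1.2.1.1 * fE z p.1.2.1.2)) = TE y z x := by
    rw [TE, ← Equiv.tsum_eq eR5 (fun p : {p : MixT | 0 < p.1 ∧ p.1 < p.2.1.2} =>
      fE x p.1.1 * (fE y p.1.2.1.1 * fE z p.1.2.1.2))]
    refine tsum_congr fun t => ?_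
    show fE x t.1.2.2 * (fE y t.1.1 * fE z t.1.2.1) = fE y t.1.1 * fE z t.1.2.1 * fE x t.1.2.2
    ring
  rw [hprod, hsplit, h1, h2, h3, h4, h5]
  ring

lemma grand (s₁ s₂ s₃ : ℝ) :
    ZE s₁ * ZE s₂ * ZE s₃ + 2 * ZE (s₁+s₂+s₃) =
      TE s₁ s₂ s₃ + TE s₁ s₃ s₂ + TE s₂ s₁ s₃ + TE s₂ s₃ s₁ + TE s₃ s₁ s₂ + TE s₃ s₂ s₁
      + ZE s₁ * ZE (s₂+s₃) + ZE s₂ * ZE (s₁+s₃) + ZE s₃ * ZE (s₁+s₂) := by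
  rw [mul_assoc (ZE s₁), pair_reflect s₂ s₃, mul_add, mul_add, mixed s₁ s₂ s₃, mixed s₁ s₃ s₂,
    pair_reflect s₁ (s₂+s₃), pair_reflect s₂ (s₁+s₃), pair_reflect s₃ (s₁+s₂),
    show s₁+(s₂+s₃) = s₁+s₂+s₃ from by ring, show s₂+(s₁+s₃) = s₁+s₂+s₃ from by ring,
    show s₃+(s₁+s₂) = s₁+s₂+s₃ from by ring]
  ring

lemma DE_ne_top (x y : ℝ) (hx : 1 < x) (hy : 1 < y) : DE x y ≠ ⊤ := by
  have h : DE x y ≤ ZE x * ZE y := by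
    rw [pair_reflect x y]
    exact le_add_right (le_add_right le_rfl)
  exact ne_top_of_le_ne_top (ENNReal.mul_ne_top (ZE_ne_top x hx) (ZE_ne_top y hy)) h

lemma TE_ne_top (a b c : ℝ) (ha : 1 < a) (hb : 1 < b) (hc : 1 < c) : TE a b c ≠ ⊤ := by
  have h : TE a b c ≤ ZE a * DE b c := by
    rw [mixed a b c]
    exact le_add_right (le_add_right (le_add_right (le_add_right le_rfl)))
  exact ne_top_of_le_ne_top (ENNReal.mul_ne_top (ZE_ne_top a ha) (DE_ne_top b c hb hc)) h


lemma TE_toReal (a b c : ℝ) (h : TE a b c ≠ ⊤) :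
    (TE a b c).toReal = tripleZeta a b c := by
  have hTE : TE a b c = ∑' p : Tsub, ENNReal.ofReal
      ((1:ℝ) / ((p.1.1:ℝ)^a * (p.1.2.1:ℝ)^b * (p.1.2.2:ℝ)^c)) := by
    refine tsum_congr fun p => ?_
    obtain ⟨⟨n₁, n₂, n₃⟩, h1, h2, h3⟩ := p
    dsimp only at h1 h2 h3
    have e1 : n₁ ≠ 0 := by omega
    have e2 : n₂ ≠ 0 := by omega
    have e3 : n₃ ≠ 0 := by omega
    simp only [fE, e1, e2, e3, if_false]
    rw [← ENNReal.ofReal_mul (by positivity), ← ENNReal.ofReal_mul (by positivity)]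
    congr 1
    rw [div_mul_div_comm, div_mul_div_comm]
    norm_num
  have hnn : ∀ p : Tsub,
      0 ≤ (1:ℝ) / ((p.1.1:ℝ)^a * (p.1.2.1:ℝ)^b * (p.1.2.2:ℝ)^c) := fun p => by positivity
  have hsum : Summable fun p : Tsub =>
      (1:ℝ) / ((p.1.1:ℝ)^a * (p.1.2.1:ℝ)^b * (p.1.2.2:ℝ)^c) := by
    rw [hTE] at h
    have h2 : Summable fun p : Tsub =>
        ((1:ℝ) / ((p.1.1:ℝ)^a * (p.1.2.1:ℝ)^b * (p.1.2.2:ℝ)^c)).toNNReal :=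
      ENNReal.tsum_coe_ne_top_iff_summable.mp h
    refine (NNReal.summable_coe.mpr h2).congr fun p => ?_
    exact Real.coe_toNNReal _ (hnn p)
  rw [hTE, ← ENNReal.ofReal_tsum_of_nonneg hnn hsum, ENNReal.toReal_ofReal (tsum_nonneg hnn)]
  rfl

theorem stmt_5 (s₁ s₂ s₃ : ℝ) (h₁ : 1 < s₁) (h₂ : 1 < s₂) (h₃ : 1 < s₃) :
    zetaR s₁ * zetaR s₂ * zetaR s₃ =
      tripleZeta s₁ s₂ s₃ + tripleZeta s₁ s₃ s₂ + tripleZeta s₂ s₁ s₃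
        + tripleZeta s₂ s₃ s₁ + tripleZeta s₃ s₁ s₂ + tripleZeta s₃ s₂ s₁
        + zetaR s₁ * zetaR (s₂ + s₃) + zetaR s₂ * zetaR (s₁ + s₃)
        + zetaR s₃ * zetaR (s₁ + s₂)
        - 2 * zetaR (s₁ + s₂ + s₃) := by
  have hs23 : 1 < s₂ + s₃ := by linarith
  have hs13 : 1 < s₁ + s₃ := by linarith
  have hs12 : 1 < s₁ + s₂ := by linarith
  have hs123 : 1 < s₁ + s₂ + s₃ := by linarith
  have hT1 := TE_ne_top s₁ s₂ s₃ h₁ h₂ h₃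
  have hT2 := TE_ne_top s₁ s₃ s₂ h₁ h₃ h₂
  have hT3 := TE_ne_top s₂ s₁ s₃ h₂ h₁ h₃
  have hT4 := TE_ne_top s₂ s₃ s₁ h₂ h₃ h₁
  have hT5 := TE_ne_top s₃ s₁ s₂ h₃ h₁ h₂
  have hT6 := TE_ne_top s₃ s₂ s₁ h₃ h₂ h₁
  have hQ1 : ZE s₁ * ZE (s₂ + s₃) ≠ ⊤ := ENNReal.mul_ne_top (ZE_ne_top s₁ h₁) (ZE_ne_top _ hs23)
  have hQ2 : ZE s₂ * ZE (s₁ + s₃) ≠ ⊤ := ENNReal.mul_ne_top (ZE_ne_top s₂ h₂) (ZE_ne_top _ hs13)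
  have hQ3 : ZE s₃ * ZE (s₁ + s₂) ≠ ⊤ := ENNReal.mul_ne_top (ZE_ne_top s₃ h₃) (ZE_ne_top _ hs12)
  have hL : ZE s₁ * ZE s₂ * ZE s₃ ≠ ⊤ :=
    ENNReal.mul_ne_top (ENNReal.mul_ne_top (ZE_ne_top s₁ h₁) (ZE_ne_top s₂ h₂)) (ZE_ne_top s₃ h₃)
  have hM : (2 : ℝ≥0∞) * ZE (s₁ + s₂ + s₃) ≠ ⊤ :=
    ENNReal.mul_ne_top (by norm_num) (ZE_ne_top _ hs123)
  have A2 := ENNReal.add_ne_top.mpr ⟨hT1, hT2⟩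
  have A3 := ENNReal.add_ne_top.mpr ⟨A2, hT3⟩
  have A4 := ENNReal.add_ne_top.mpr ⟨A3, hT4⟩
  have A5 := ENNReal.add_ne_top.mpr ⟨A4, hT5⟩
  have A6 := ENNReal.add_ne_top.mpr ⟨A5, hT6⟩
  have A7 := ENNReal.add_ne_top.mpr ⟨A6, hQ1⟩
  have A8 := ENNReal.add_ne_top.mpr ⟨A7, hQ2⟩
  have key := congrArg ENNReal.toReal (grand s₁ s₂ s₃)
  rw [ENNReal.toReal_add hL hM, ENNReal.toReal_add A8 hQ3, ENNReal.toReal_add A7 hQ2,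
    ENNReal.toReal_add A6 hQ1, ENNReal.toReal_add A5 hT6, ENNReal.toReal_add A4 hT5,
    ENNReal.toReal_add A3 hT4, ENNReal.toReal_add A2 hT3, ENNReal.toReal_add hT1 hT2] at key
  simp only [ENNReal.toReal_mul, ENNReal.toReal_ofNat] at key
  rw [ZE_toReal s₁ h₁, ZE_toReal s₂ h₂, ZE_toReal s₃ h₃, ZE_toReal _ hs23, ZE_toReal _ hs13,
    ZE_toReal _ hs12, ZE_toReal _ hs123, TE_toReal s₁ s₂ s₃ hT1, TE_toReal s₁ s₃ s₂ hT2,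
    TE_toReal s₂ s₁ s₃ hT3, TE_toReal s₂ s₃ s₁ hT4, TE_toReal s₃ s₁ s₂ hT5,
    TE_toReal s₃ s₂ s₁ hT6] at key
  linarith [key]
end

section
/- The limit as y → 0⁺ of (∫_y^∞ (cos t)/t² dt − ∫_{y/2}^y (cos t)/t² dt) exists and equals −π/2. -/
/-!
Integrating by parts, `∫_y^∞ cos t / t² = cos y / y - ∫_y^∞ sin t / t` and
`∫_{y/2}^y cos t / t² = 2 cos (y/2) / y - cos y / y - ∫_{y/2}^y sin t / t`; the `1/y` terms
cancel up to `2 (cos y - cos (y/2)) / y → 0`, so the limit is `-∫_0^∞ sin t / t = -π/2`.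

The Dirichlet integral is evaluated along `x = (2n+1)π/2`, where
`∫_0^x sin t / t = ∫_0^{π/2} sin ((2n+1)t) / t`. The Dirichlet kernel `sin ((2n+1)t) / sin t`
integrates to `π/2` over `[0, π/2]`, and the difference `sin ((2n+1)t) (1/sin t - 1/t)` integrates
to something tending to `0` by the Riemann–Lebesgue lemma, as `1/sin t - 1/t` is bounded there.
-/

open Filter Real MeasureTheory Set Topology FourierTransform intervalIntegral

theorem tendsto_integral_sin_mul_atTop {f : ℝ → ℝ} (hf : Integrable f) :
    Tendsto (fun w : ℝ => ∫ t, sin (w * t) * f t) atTop (𝓝 0) := by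
  -- at frequency `-w / (2π)` the Fourier character is `𝐞 (-(t * -(w / (2π)))) = exp (i w t)`,
  -- whose imaginary part is `sin (w t)`
  have hscale : Tendsto (fun w : ℝ => -(w / (2 * π))) atTop (cocompact ℝ) :=
    (tendsto_neg_atTop_atBot.comp (tendsto_id.atTop_div_const (by positivity))).mono_right
      atBot_le_cocompact
  have hRL := (Real.tendsto_integral_exp_smul_cocompact fun t => (f t : ℂ)).comp hscale
  have him : Tendsto (fun w : ℝ => (∫ t : ℝ, 𝐞 (-(t * -(w / (2 * π)))) • (f t : ℂ)).im)
      atTop (𝓝 0) :=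
    (Complex.continuous_im.tendsto 0).comp hRL
  refine him.congr fun w => ?_
  have hint : Integrable (fun t : ℝ => 𝐞 (-(t * -(w / (2 * π)))) • (f t : ℂ)) :=
    hf.norm.mono' (by fun_prop) (ae_of_all _ fun t => by simp)
  rw [← RCLike.im_to_complex, ← integral_im hint]
  congr 1 with t
  rw [RCLike.im_to_complex, Circle.smul_def, Real.fourierChar_apply, smul_eq_mul,
    show (2 * π * -(t * -(w / (2 * π))) : ℝ) = w * t by field_simp,
    Complex.im_mul_ofReal, Complex.exp_ofReal_mul_I_im]

theorem tendsto_setIntegral_sin_mul_atTop {f : ℝ → ℝ} {s : Set ℝ} (hs : MeasurableSet s)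
    (hf : IntegrableOn f s) :
    Tendsto (fun w : ℝ => ∫ t in s, sin (w * t) * f t) atTop (𝓝 0) := by
  simpa only [← MeasureTheory.integral_indicator hs, indicator_mul_right] using
    tendsto_integral_sin_mul_atTop ((integrable_indicator_iff hs).2 hf)

theorem tendsto_intervalIntegral_sin_mul_atTop {f : ℝ → ℝ} {a b : ℝ}
    (hf : IntervalIntegrable f volume a b) :
    Tendsto (fun w : ℝ => ∫ t in a..b, sin (w * t) * f t) atTop (𝓝 0) := by
  simpa only [intervalIntegral, sub_zero] using
    (tendsto_setIntegral_sin_mul_atTop measurableSet_Ioc hf.1).sub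
      (tendsto_setIntegral_sin_mul_atTop measurableSet_Ioc hf.2)

lemma sin_pos_of_mem_uIoo_zero_pi_div_two {t : ℝ} (ht : t ∈ uIoo 0 (π / 2)) : 0 < sin t := by
  rw [uIoo_of_le (by positivity)] at ht
  exact sin_pos_of_pos_of_lt_pi ht.1 (ht.2.trans (by linarith [pi_pos]))

lemma sin_add_two_mul_div_sin (a : ℝ) {t : ℝ} (ht : sin t ≠ 0) :
    sin ((a + 2) * t) / sin t = sin (a * t) / sin t + 2 * cos ((a + 1) * t) := by
  rw [show (a + 2) * t = (a + 1) * t + t by ring, show a * t = (a + 1) * t - t by ring,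
    sin_add, sin_sub]
  field_simp
  ring

lemma eqOn_sin_odd_mul_div_sin_succ (n : ℕ) :
    EqOn (fun t => sin ((2 * (n + 1 : ℕ) + 1) * t) / sin t)
      (fun t => sin ((2 * n + 1) * t) / sin t + 2 * cos ((2 * n + 2) * t)) (uIoo 0 (π / 2)) :=
  fun t ht => by
    push_cast
    convert sin_add_two_mul_div_sin (2 * n + 1) (sin_pos_of_mem_uIoo_zero_pi_div_two ht).ne'
      using 4 <;> ring

lemma integral_cos_two_mul_mul_eq_zero {m : ℕ} (hm : m ≠ 0) :
    ∫ t in 0..π / 2, cos (2 * m * t) = 0 := by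
  have hc : (2 * m : ℝ) ≠ 0 := by positivity
  rw [integral_comp_mul_left (fun t => cos t) hc, integral_cos,
    show 2 * (m : ℝ) * (π / 2) = m * π by ring, sin_nat_mul_pi]
  simp

lemma intervalIntegrable_sin_odd_mul_div_sin (n : ℕ) :
    IntervalIntegrable (fun t => sin ((2 * n + 1) * t) / sin t) volume 0 (π / 2) := by
  induction n with
  | zero =>
    refine (intervalIntegrable_const (c := (1 : ℝ))).congr_uIoo fun t ht => ?_
    simp [div_self (sin_pos_of_mem_uIoo_zero_pi_div_two ht).ne']
  | succ n ih =>
    have hcos : Continuous fun t => 2 * cos ((2 * n + 2) * t) := by fun_prop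
    exact (ih.add (hcos.intervalIntegrable _ _)).congr_uIoo (eqOn_sin_odd_mul_div_sin_succ n).symm

theorem integral_sin_odd_mul_div_sin (n : ℕ) :
    ∫ t in 0..π / 2, sin ((2 * n + 1) * t) / sin t = π / 2 := by
  induction n with
  | zero =>
    rw [integral_congr_uIoo (g := fun _ => 1) fun t ht => ?_]
    · simp
    simp [div_self (sin_pos_of_mem_uIoo_zero_pi_div_two ht).ne']
  | succ n ih =>
    have hcos : ∫ t in 0..π / 2, cos ((2 * n + 2) * t) = 0 := by
      simpa [mul_add] using integral_cos_two_mul_mul_eq_zero n.succ_ne_zero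
    have hcont : Continuous fun t => 2 * cos ((2 * n + 2) * t) := by fun_prop
    rw [integral_congr_uIoo (eqOn_sin_odd_mul_div_sin_succ n),
      intervalIntegral.integral_add (intervalIntegrable_sin_odd_mul_div_sin n)
        (hcont.intervalIntegrable _ _), ih, intervalIntegral.integral_const_mul, hcos, mul_zero,
      add_zero]

lemma abs_inv_sin_sub_inv_le {t : ℝ} (h₀ : 0 < t) (h₁ : t ≤ π / 2) :
    |(sin t)⁻¹ - t⁻¹| ≤ π / 12 * t := by
  have hsin : 2 / π * t ≤ sin t := mul_le_sin h₀.le h₁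
  have hsin₀ : 0 < sin t := lt_of_lt_of_le (by positivity) hsin
  rw [inv_sub_inv hsin₀.ne' h₀.ne', abs_div, abs_of_pos (mul_pos hsin₀ h₀),
    div_le_iff₀ (mul_pos hsin₀ h₀)]
  calc |t - sin t| ≤ |t| ^ 3 / 6 := abs_sub_sin_le t
    _ = π / 12 * t * (2 / π * t * t) := by rw [abs_of_pos h₀]; field_simp; ring
    _ ≤ π / 12 * t * (sin t * t) := by gcongr

lemma intervalIntegrable_inv_sin_sub_inv :
    IntervalIntegrable (fun t => (sin t)⁻¹ - t⁻¹) volume 0 (π / 2) := by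
  have hbound : Continuous fun t : ℝ => π / 12 * t := by fun_prop
  refine (hbound.intervalIntegrable 0 (π / 2)).mono_fun' (by fun_prop) ?_
  rw [uIoc_of_le (by positivity)]
  filter_upwards [ae_restrict_mem measurableSet_Ioc] with t ht
  exact abs_inv_sin_sub_inv_le ht.1 ht.2

noncomputable def sineIntegral (x : ℝ) : ℝ := ∫ t in 0..x, sin t / t

lemma intervalIntegrable_sin_div (a b : ℝ) :
    IntervalIntegrable (fun t => sin t / t) volume a b :=
  intervalIntegrable_const.mono_fun'
    (by fun_prop : Measurable fun t => sin t / t).aestronglyMeasurable <|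
      ae_of_all _ fun t => show ‖sin t / t‖ ≤ 1 by
        rw [norm_eq_abs, abs_div]
        exact div_le_one_of_le₀ abs_sin_le_abs (abs_nonneg t)

@[fun_prop]
lemma continuous_sineIntegral : Continuous sineIntegral :=
  continuous_primitive intervalIntegrable_sin_div 0

lemma sineIntegral_zero : sineIntegral 0 = 0 := integral_same

lemma integral_sin_div (a b : ℝ) :
    ∫ t in a..b, sin t / t = sineIntegral b - sineIntegral a :=
  (integral_interval_sub_left (intervalIntegrable_sin_div 0 b)
    (intervalIntegrable_sin_div 0 a)).symm

lemma sineIntegral_mul {c : ℝ} (hc : c ≠ 0) (x : ℝ) :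
    sineIntegral (c * x) = ∫ t in 0..x, sin (c * t) / t := by
  have hsub := smul_integral_comp_mul_left (a := 0) (b := x) (fun u : ℝ => sin u / u) c
  rw [mul_zero] at hsub
  rw [sineIntegral, ← hsub, smul_eq_mul, ← intervalIntegral.integral_const_mul]
  refine integral_congr fun t _ => ?_
  rcases eq_or_ne t 0 with rfl | ht
  · simp
  · field_simp

lemma hasDerivAt_neg_cos_div {t : ℝ} (ht : t ≠ 0) :
    HasDerivAt (fun x => -(cos x / x)) (sin t / t + cos t / t ^ 2) t := by
  refine ((hasDerivAt_cos t).div (hasDerivAt_id' t) ht).neg.congr_deriv ?_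
  field_simp
  ring

lemma integral_cos_div_sq {a b : ℝ} (ha : 0 < a) (hb : 0 < b) :
    ∫ t in a..b, cos t / t ^ 2 = cos a / a - cos b / b - (sineIntegral b - sineIntegral a) := by
  have hpos : ∀ t ∈ uIcc a b, 0 < t := fun t ht => (lt_min ha hb).trans_le ht.1
  have hcos : IntervalIntegrable (fun t => cos t / t ^ 2) volume a b :=
    (continuousOn_cos.div (by fun_prop) fun t ht => (pow_pos (hpos t ht) 2).ne').intervalIntegrable
  have hFTC := integral_eq_sub_of_hasDerivAt (fun t ht => hasDerivAt_neg_cos_div (hpos t ht).ne')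
    ((intervalIntegrable_sin_div a b).add hcos)
  rw [intervalIntegral.integral_add (intervalIntegrable_sin_div a b) hcos, integral_sin_div] at hFTC
  linarith

lemma integrableOn_Ioi_cos_div_sq {y : ℝ} (hy : 0 < y) :
    IntegrableOn (fun t => cos t / t ^ 2) (Ioi y) := by
  refine (integrableOn_Ioi_rpow_of_lt (by norm_num : (-2 : ℝ) < -1) hy).mono'
    (by fun_prop : Measurable fun t => cos t / t ^ 2).aestronglyMeasurable ?_
  filter_upwards [ae_restrict_mem measurableSet_Ioi] with t ht
  have ht₀ : 0 < t := hy.trans ht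
  rw [norm_div, norm_pow, norm_of_nonneg ht₀.le, rpow_neg ht₀.le, rpow_two, ← one_div]
  gcongr
  exact abs_cos_le_one t

lemma tendsto_cos_div_atTop : Tendsto (fun x => cos x / x) atTop (𝓝 0) :=
  squeeze_zero_norm' (eventually_gt_atTop 0 |>.mono fun x hx => by
    rw [norm_div, norm_of_nonneg hx.le, ← one_div]
    gcongr
    exact abs_cos_le_one x) tendsto_inv_atTop_zero

lemma tendsto_sineIntegral_atTop_of_pos {y : ℝ} (hy : 0 < y) :
    Tendsto sineIntegral atTop
      (𝓝 (sineIntegral y + cos y / y - ∫ t in Ioi y, cos t / t ^ 2)) := by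
  have hlim := ((tendsto_const_nhds (x := sineIntegral y + cos y / y)).sub
    tendsto_cos_div_atTop).sub
    (intervalIntegral_tendsto_integral_Ioi y (integrableOn_Ioi_cos_div_sq hy) tendsto_id)
  rw [sub_zero] at hlim
  refine hlim.congr' (eventually_gt_atTop 0 |>.mono fun x hx => ?_)
  simp only [id, integral_cos_div_sq hy hx]
  ring

lemma sineIntegral_odd_mul_pi_div_two (n : ℕ) :
    sineIntegral ((2 * n + 1) * (π / 2))
      = π / 2 - ∫ t in 0..π / 2, sin ((2 * n + 1) * t) * ((sin t)⁻¹ - t⁻¹) := by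
  have hcont : Continuous fun t : ℝ => sin ((2 * n + 1) * t) := by fun_prop
  have hsplit : ∫ t in 0..π / 2, sin ((2 * n + 1) * t) / t
      = (∫ t in 0..π / 2, sin ((2 * n + 1) * t) / sin t)
        - ∫ t in 0..π / 2, sin ((2 * n + 1) * t) * ((sin t)⁻¹ - t⁻¹) := by
    rw [← intervalIntegral.integral_sub (intervalIntegrable_sin_odd_mul_div_sin n)
      (intervalIntegrable_inv_sin_sub_inv.continuousOn_mul hcont.continuousOn)]
    congr 1 with t
    ring
  rw [sineIntegral_mul (by positivity), hsplit, integral_sin_odd_mul_div_sin]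

theorem tendsto_sineIntegral_atTop : Tendsto sineIntegral atTop (𝓝 (π / 2)) := by
  have hodd : Tendsto (fun n : ℕ => (2 * n + 1 : ℝ)) atTop atTop :=
    tendsto_atTop_add_const_right _ _ <|
      (tendsto_natCast_atTop_atTop (R := ℝ)).const_mul_atTop two_pos
  have hsub :
      Tendsto (fun n : ℕ => sineIntegral ((2 * n + 1) * (π / 2))) atTop (𝓝 (π / 2)) := by
    simpa only [sineIntegral_odd_mul_pi_div_two, Function.comp_apply, sub_zero] using
      tendsto_const_nhds.sub
        ((tendsto_intervalIntegral_sin_mul_atTop intervalIntegrable_inv_sin_sub_inv).comp hodd)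
  have hlim := tendsto_sineIntegral_atTop_of_pos one_pos
  rwa [tendsto_nhds_unique (hlim.comp (hodd.atTop_mul_const (by positivity))) hsub] at hlim

lemma integral_Ioi_cos_div_sq {y : ℝ} (hy : 0 < y) :
    ∫ t in Ioi y, cos t / t ^ 2 = cos y / y + sineIntegral y - π / 2 := by
  have := tendsto_nhds_unique (tendsto_sineIntegral_atTop_of_pos hy) tendsto_sineIntegral_atTop
  linarith

lemma tendsto_cos_sub_cos_half_div :
    Tendsto (fun y => (cos y - cos (y / 2)) / y) (𝓝[>] 0) (𝓝 0) := by
  have hderiv : HasDerivAt (fun y => cos y - cos (y / 2)) 0 0 :=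
    ((hasDerivAt_id' 0).cos.fun_sub ((hasDerivAt_id' 0).div_const 2).cos).congr_deriv (by simp)
  simpa [div_eq_inv_mul] using hderiv.tendsto_slope_zero_right

theorem stmt_16 :
    Tendsto (fun y : ℝ =>
      (∫ t in Set.Ioi y, Real.cos t / t ^ 2)
        - ∫ t in (y / 2)..y, Real.cos t / t ^ 2)
      (nhdsWithin 0 (Set.Ioi 0)) (nhds (-(Real.pi / 2))) := by
  have hSi : Tendsto (fun y => 2 * sineIntegral y - sineIntegral (y / 2)) (𝓝[>] 0) (𝓝 0) := by
    have hcont : Continuous fun y => 2 * sineIntegral y - sineIntegral (y / 2) := by fun_prop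
    simpa [sineIntegral_zero] using (hcont.tendsto 0).mono_left nhdsWithin_le_nhds
  have hlim := ((tendsto_cos_sub_cos_half_div.const_mul 2).add hSi).sub_const (π / 2)
  rw [mul_zero, add_zero, zero_sub] at hlim
  refine hlim.congr' (eventually_mem_nhdsWithin.mono fun y (hy : 0 < y) => ?_)
  dsimp only
  rw [integral_Ioi_cos_div_sq hy, integral_cos_div_sq (half_pos hy) hy]
  field_simp
  ring
end

section
/- For fixed real r > 0, the limit as y → 0⁺ of (∫_y^∞ t^{−1} e^{−t} dt − ∫_{r y²}^y t^{−1} e^{−t} dt) exists and equals −γ + ln r. -/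
open Filter MeasureTheory Set Real Topology

/-!
Integrating by parts against `d(-e^{-t})` gives
`∫_y^∞ e^{-t}/t = ∫_y^∞ e^{-t} log t - e^{-y} log y`, and `∫_0^∞ e^{-t} log t = Γ'(1) = -γ`.
On the short interval `(r y², y]` the integrand is `1/t + O(1)`, so the second integral is
`log (1 / (r y)) + O(y)`. The two `log y` terms cancel up to `(1 - e^{-y}) log y → 0`.
-/

lemma abs_exp_neg_sub_one_div_le {t : ℝ} (ht : 0 < t) : |(exp (-t) - 1) / t| ≤ 1 := by
  have h_le_one : exp (-t) ≤ 1 := exp_le_one_iff.mpr (by linarith)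
  have h_ge : 1 - t ≤ exp (-t) := by linarith [add_one_le_exp (-t)]
  rw [abs_div, abs_of_pos ht, div_le_one ht, abs_le]
  constructor <;> linarith

lemma abs_integral_exp_neg_div_sub_log_le {a b : ℝ} (ha : 0 < a) (hab : a ≤ b) :
    |(∫ t in Ioc a b, exp (-t) / t) - log (b / a)| ≤ b - a := by
  have hinv : ContinuousOn (fun t : ℝ => t⁻¹) (Icc a b) :=
    continuousOn_inv₀.mono fun t ht => (ha.trans_le ht.1).ne'
  have hint_inv : IntegrableOn (fun t : ℝ => t⁻¹) (Ioc a b) :=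
    hinv.integrableOn_Icc.mono_set Ioc_subset_Icc_self
  have hint_exp : IntegrableOn (fun t => exp (-t) / t) (Ioc a b) :=
    ((continuous_exp.comp continuous_neg).continuousOn.mul hinv).integrableOn_Icc.mono_set
      Ioc_subset_Icc_self
  have hlog : ∫ t in Ioc a b, t⁻¹ = log (b / a) := by
    rw [← intervalIntegral.integral_of_le hab,
      integral_inv (notMem_uIcc_of_lt ha (ha.trans_le hab))]
  rw [← hlog, ← integral_sub hint_exp hint_inv, ← Real.norm_eq_abs,
    ← mul_one (b - a), ← Real.volume_real_Ioc_of_le hab, mul_comm]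
  refine norm_setIntegral_le_of_norm_le_const measure_Ioc_lt_top fun t ht => ?_
  rw [Real.norm_eq_abs, ← one_div, div_sub_div_same]
  exact abs_exp_neg_sub_one_div_le (ha.trans ht.1)

lemma abs_log_le_add_two_mul_rpow {t : ℝ} (ht : 0 < t) :
    |log t| ≤ t + 2 * t ^ (-(1 / 2) : ℝ) := by
  have hpos : log t ≤ t := by simpa using log_le_rpow_div ht.le one_pos
  have hneg : -log t ≤ 2 * t ^ (-(1 / 2) : ℝ) := by
    have := log_le_rpow_div (inv_nonneg.mpr ht.le) (by norm_num : (0 : ℝ) < 1 / 2)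
    rw [log_inv, inv_rpow ht.le, ← rpow_neg ht.le] at this
    linarith
  have h0 : 0 ≤ t ^ (-(1 / 2) : ℝ) := rpow_nonneg ht.le _
  rw [abs_le]
  constructor <;> linarith

lemma integrableOn_exp_neg_mul_log : IntegrableOn (fun t => exp (-t) * log t) (Ioi 0) := by
  have hbound : IntegrableOn
      (fun t : ℝ => exp (-t) * t ^ ((2 : ℝ) - 1) + 2 * (exp (-t) * t ^ ((1 / 2 : ℝ) - 1)))
      (Ioi 0) :=
    (GammaIntegral_convergent two_pos).add ((GammaIntegral_convergent one_half_pos).const_mul 2)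
  refine hbound.mono' (by fun_prop) ?_
  filter_upwards [ae_restrict_mem measurableSet_Ioi] with t (ht : 0 < t)
  rw [Real.norm_eq_abs, abs_mul, abs_of_pos (exp_pos _)]
  calc exp (-t) * |log t| ≤ exp (-t) * (t + 2 * t ^ (-(1 / 2) : ℝ)) :=
        mul_le_mul_of_nonneg_left (abs_log_le_add_two_mul_rpow ht) (exp_pos _).le
    _ = _ := by norm_num; ring

lemma integral_exp_neg_mul_log :
    ∫ t in Ioi (0 : ℝ), exp (-t) * log t = -eulerMascheroniConstant := by
  have hGammaIntegral : HasDerivAt Complex.GammaIntegral (-(eulerMascheroniConstant : ℂ)) 1 := by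
    refine Complex.hasDerivAt_Gamma_one.congr_of_eventuallyEq ?_
    filter_upwards [(isOpen_lt continuous_const Complex.continuous_re).mem_nhds
      (by norm_num : (0 : ℝ) < (1 : ℂ).re)] with s hs
    exact (Complex.Gamma_eq_integral hs).symm
  have h := (Complex.hasDerivAt_GammaIntegral (by norm_num)).unique hGammaIntegral
  simp only [sub_self, Complex.cpow_zero, one_mul] at h
  rw [← Complex.ofReal_inj, Complex.ofReal_neg, ← h, ← integral_complex_ofReal]
  simp_rw [Complex.ofReal_mul, mul_comm]

lemma integrableOn_exp_neg_div_Ioi {y : ℝ} (hy : 0 < y) :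
    IntegrableOn (fun t => exp (-t) / t) (Ioi y) := by
  refine ((integrableOn_exp_neg_Ioi y).div_const y).mono'
    ((measurable_exp.comp measurable_neg).div measurable_id).aestronglyMeasurable ?_
  filter_upwards [ae_restrict_mem measurableSet_Ioi] with t (ht : y < t)
  rw [Real.norm_eq_abs, abs_of_pos (div_pos (exp_pos _) (hy.trans ht))]
  exact div_le_div_of_nonneg_left (exp_pos _).le hy ht.le

lemma integral_exp_neg_mul_log_Ioi {y : ℝ} (hy : 0 < y) :
    ∫ t in Ioi y, exp (-t) * log t = exp (-y) * log y + ∫ t in Ioi y, exp (-t) / t := by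
  have hlog_int : IntegrableOn (fun t => exp (-t) * log t) (Ioi y) :=
    integrableOn_exp_neg_mul_log.mono_set (Ioi_subset_Ioi hy.le)
  have hderiv : ∀ t ∈ Ici y, HasDerivAt (fun t => -(exp (-t) * log t))
      (exp (-t) * log t - exp (-t) / t) t := by
    intro t (ht : y ≤ t)
    refine (((hasDerivAt_neg t).exp).fun_mul
      (hasDerivAt_log (hy.trans_le ht).ne')).fun_neg.congr_deriv ?_
    ring
  have hlim : Tendsto (fun t => -(exp (-t) * log t)) atTop (𝓝 0) := by
    refine squeeze_zero_norm' ?_ (by simpa using tendsto_pow_mul_exp_neg_atTop_nhds_zero 1)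
    filter_upwards [eventually_ge_atTop 1] with t ht
    rw [norm_neg, norm_mul, Real.norm_of_nonneg (log_nonneg ht),
      Real.norm_of_nonneg (exp_pos _).le, mul_comm]
    exact mul_le_mul_of_nonneg_right ((log_le_sub_one_of_pos (by linarith)).trans (by linarith))
      (exp_pos _).le
  have hftc := integral_Ioi_of_hasDerivAt_of_tendsto' hderiv
    (hlog_int.sub (integrableOn_exp_neg_div_Ioi hy)) hlim
  rw [integral_sub hlog_int (integrableOn_exp_neg_div_Ioi hy)] at hftc
  linarith

lemma tendsto_setIntegral_Ioi_nhdsGT {E : Type*} [NormedAddCommGroup E] [NormedSpace ℝ E]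
    {g : ℝ → E} {a : ℝ} (hg : IntegrableOn g (Ioi a)) :
    Tendsto (fun y => ∫ t in Ioi y, g t) (𝓝[>] a) (𝓝 (∫ t in Ioi a, g t)) := by
  refine ((aecover_Ioi_of_Ioi (μ := volume) (l := 𝓝[>] a) (a := id)
    nhdsWithin_le_nhds).integral_tendsto_of_countably_generated hg).congr' ?_
  filter_upwards [self_mem_nhdsWithin] with y (hy : a < y)
  rw [Measure.restrict_restrict measurableSet_Ioi, Ioi_inter_Ioi, id, sup_of_le_left hy.le]

lemma tendsto_one_sub_exp_neg_mul_log :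
    Tendsto (fun y => (1 - exp (-y)) * log y) (𝓝[>] 0) (𝓝 0) := by
  refine squeeze_zero_norm' ?_ (by simpa using (tendsto_log_mul_rpow_nhdsGT_zero one_pos).norm)
  filter_upwards [self_mem_nhdsWithin] with y (hy : 0 < y)
  have h_le : 1 - exp (-y) ≤ y := by linarith [add_one_le_exp (-y)]
  have h_nonneg : 0 ≤ 1 - exp (-y) := sub_nonneg.mpr (exp_le_one_iff.mpr (by linarith))
  rw [norm_mul, Real.norm_of_nonneg h_nonneg, Real.norm_eq_abs, abs_of_pos hy, mul_comm]
  exact mul_le_mul_of_nonneg_left h_le (abs_nonneg _)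

lemma eventually_mul_sq_le_self {r : ℝ} (hr : 0 < r) :
    ∀ᶠ y in 𝓝[>] (0 : ℝ), 0 < y ∧ r * y ^ 2 ≤ y := by
  filter_upwards [Ioo_mem_nhdsGT (one_div_pos.mpr hr)] with y ⟨hy, hyr⟩
  have : y * r < 1 := (lt_div_iff₀ hr).mp hyr
  exact ⟨hy, by nlinarith⟩

lemma tendsto_integral_Ioc_exp_neg_div_sub_log {r : ℝ} (hr : 0 < r) :
    Tendsto (fun y => (∫ t in Ioc (r * y ^ 2) y, exp (-t) / t) - log (y / (r * y ^ 2)))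
      (𝓝[>] 0) (𝓝 0) := by
  refine squeeze_zero_norm' ?_ (tendsto_id.mono_left nhdsWithin_le_nhds)
  filter_upwards [eventually_mul_sq_le_self hr] with y ⟨hy, hry⟩
  calc _ ≤ y - r * y ^ 2 := abs_integral_exp_neg_div_sub_log_le (by positivity) hry
    _ ≤ y := by nlinarith

theorem stmt_17 (r : ℝ) (hr : 0 < r) :
    Tendsto (fun y : ℝ =>
      (∫ t in Set.Ioi y, Real.exp (-t) / t)
        - ∫ t in Set.Ioc (r * y ^ 2) y, Real.exp (-t) / t)
      (nhdsWithin 0 (Set.Ioi 0))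
      (nhds (-Real.eulerMascheroniConstant + Real.log r)) := by
  have hlim := (((tendsto_setIntegral_Ioi_nhdsGT integrableOn_exp_neg_mul_log).add
    tendsto_one_sub_exp_neg_mul_log).sub (tendsto_integral_Ioc_exp_neg_div_sub_log hr)).add_const
    (log r)
  rw [integral_exp_neg_mul_log, add_zero, sub_zero] at hlim
  refine hlim.congr' ?_
  filter_upwards [self_mem_nhdsWithin] with y (hy : 0 < y)
  rw [integral_exp_neg_mul_log_Ioi hy, log_div hy.ne' (by positivity),
    log_mul hr.ne' (by positivity), log_pow]
  push_cast
  ring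
end

section
/- For real s with 0 < s < 1, the limit as m → ∞ of (∑_{n=1}^m n^{−s} − ∑_{k=m+1}^{⌊2^{1/(1−s)} m⌋} k^{−s}) exists and equals ζ(s), the value of the analytic continuation of the Riemann zeta function at s. -/
/-!
By the mean value inequality, `(1 - z) (n^{-z} - ∫ₙⁿ⁺¹ x^{-z} dx)` is `O(|1 - z| |z| n^{-Re z - 1})`
locally uniformly in `z`, so its sum over `n ≥ 1` is holomorphic on `Re z > 0`. For `Re z > 1` the
sum is `(1 - z) ζ(z) + 1`, whose pole at `z = 1` is cancelled, so the identity persists on the whole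
half-plane. Telescoping the integrals, this says that `T(x) = ∑_{n ≤ x} n^{-z} - x^{1-z}/(1-z)`
tends to `ζ(z)` as the real variable `x → ∞`. For `c = 2^{1/(1-s)}` we have
`(cm)^{1-s} = 2 m^{1-s}`, so the expression in the theorem is exactly `2 T(m) - T(cm)`, which
tends to `2 ζ(s) - ζ(s)`.
-/

open Filter Finset Complex Topology

lemma hasDerivAt_ofReal_cpow_const_of_pos {x : ℝ} (hx : 0 < x) (r : ℂ) :
    HasDerivAt (fun y : ℝ => (y : ℂ) ^ r) (r * (x : ℂ) ^ (r - 1)) x := by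
  simpa using ((hasDerivAt_id (x : ℂ)).cpow_const (ofReal_mem_slitPlane.2 hx)).comp_ofReal

lemma norm_ofReal_cpow_neg_sub_le {z : ℂ} (hz : -1 ≤ z.re) {a b : ℝ} (ha : 0 < a) (hab : a ≤ b) :
    ‖(b : ℂ) ^ (-z) - (a : ℂ) ^ (-z)‖ ≤ ‖z‖ * a ^ (-z.re - 1) * (b - a) := by
  refine norm_image_sub_le_of_norm_deriv_le_segment' (f := fun y : ℝ => (y : ℂ) ^ (-z))
    (fun y hy => (hasDerivAt_ofReal_cpow_const_of_pos (ha.trans_le hy.1) _).hasDerivWithinAt)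
    (fun y hy => ?_) b ⟨hab, le_rfl⟩
  have hy0 : 0 < y := ha.trans_le hy.1
  rw [norm_mul, norm_neg, norm_cpow_eq_rpow_re_of_pos hy0]
  gcongr
  simpa using Real.rpow_le_rpow_of_nonpos ha hy.1 (by linarith : -z.re - 1 ≤ 0)

/-- `(1 - z) (n^{-z} - ∫ₙⁿ⁺¹ x^{-z} dx)`, written without the integral so that it is visibly entire
in `z`. -/
noncomputable def zetaTerm (z : ℂ) (n : ℕ) : ℂ :=
  (1 - z) * (n : ℂ) ^ (-z) - (((n : ℂ) + 1) ^ (1 - z) - (n : ℂ) ^ (1 - z))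

lemma norm_zetaTerm_le {z : ℂ} (hz : -1 ≤ z.re) {n : ℕ} (hn : 0 < n) :
    ‖zetaTerm z n‖ ≤ ‖1 - z‖ * ‖z‖ * (n : ℝ) ^ (-z.re - 1) := by
  have hn' : (0 : ℝ) < n := by exact_mod_cast hn
  set g : ℝ → ℂ := fun y => (1 - z) * (n : ℂ) ^ (-z) * y - (y : ℂ) ^ (1 - z)
  have hg : ∀ y ∈ Set.Icc (n : ℝ) (n + 1), HasDerivWithinAt g
      ((1 - z) * ((n : ℂ) ^ (-z) - (y : ℂ) ^ (-z))) (Set.Icc (n : ℝ) (n + 1)) y := by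
    intro y hy
    have h := ((hasDerivAt_id (y : ℂ)).comp_ofReal.const_mul ((1 - z) * (n : ℂ) ^ (-z))).sub
      (hasDerivAt_ofReal_cpow_const_of_pos (hn'.trans_le hy.1) (1 - z))
    rw [show 1 - z - 1 = -z by ring, mul_one, ← mul_sub] at h
    exact h.hasDerivWithinAt
  have := norm_image_sub_le_of_norm_deriv_le_segment' hg
    (C := ‖1 - z‖ * ‖z‖ * (n : ℝ) ^ (-z.re - 1)) (fun y hy => ?_) (n + 1) ⟨by linarith, le_rfl⟩
  · have e : zetaTerm z n = g (n + 1) - g n := by simp only [zetaTerm, g]; push_cast; ring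
    simpa [e] using this
  · rw [norm_mul, mul_assoc]
    gcongr
    calc _ ≤ ‖z‖ * (n : ℝ) ^ (-z.re - 1) * (y - n) := by
          rw [norm_sub_rev]
          simpa using norm_ofReal_cpow_neg_sub_le hz hn' hy.1
      _ ≤ ‖z‖ * (n : ℝ) ^ (-z.re - 1) := by
          have := hy.2
          nlinarith [mul_nonneg (norm_nonneg z) (Real.rpow_nonneg hn'.le (-z.re - 1))]

lemma differentiable_zetaTerm {n : ℕ} (hn : 0 < n) : Differentiable ℂ (zetaTerm · n) := by
  have hn0 : (n : ℂ) ≠ 0 := by exact_mod_cast hn.ne'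
  have hn1 : (n : ℂ) + 1 ≠ 0 := by exact_mod_cast n.succ_ne_zero
  unfold zetaTerm
  fun_prop (disch := simp [hn0, hn1])

lemma norm_zetaTerm_succ_le {σ R : ℝ} {z : ℂ} (hσ : -1 ≤ σ) (hz : σ ≤ z.re) (hR : ‖z‖ ≤ R)
    (n : ℕ) : ‖zetaTerm z (n + 1)‖ ≤ (1 + R) * R * ((n + 1 : ℕ) : ℝ) ^ (-σ - 1) := by
  have hn : (1 : ℝ) ≤ (n + 1 : ℕ) := by exact_mod_cast n.succ_pos
  have h1z : ‖1 - z‖ ≤ 1 + R := (norm_sub_le _ _).trans (by simpa using hR)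
  calc ‖zetaTerm z (n + 1)‖ ≤ ‖1 - z‖ * ‖z‖ * ((n + 1 : ℕ) : ℝ) ^ (-z.re - 1) :=
        norm_zetaTerm_le (by linarith) n.succ_pos
    _ ≤ (1 + R) * R * ((n + 1 : ℕ) : ℝ) ^ (-σ - 1) := by
        have hR0 : 0 ≤ R := (norm_nonneg z).trans hR
        gcongr

lemma summable_rpow_succ_neg_sub_one {σ : ℝ} (hσ : 0 < σ) :
    Summable (fun n : ℕ => ((n + 1 : ℕ) : ℝ) ^ (-σ - 1)) :=
  (summable_nat_add_iff 1).2 (Real.summable_nat_rpow.2 (by linarith))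

lemma summable_zetaTerm {z : ℂ} (hz : 0 < z.re) : Summable (fun n => zetaTerm z (n + 1)) :=
  .of_norm_bounded ((summable_rpow_succ_neg_sub_one hz).mul_left _)
    (norm_zetaTerm_succ_le (by linarith) le_rfl le_rfl)

lemma differentiableOn_tsum_zetaTerm :
    DifferentiableOn ℂ (fun z => ∑' n, zetaTerm z (n + 1)) {z | 0 < z.re} := by
  intro z (hz : 0 < z.re)
  set V := {w : ℂ | z.re / 2 < w.re} ∩ Metric.ball 0 (‖z‖ + 1)
  have hV : IsOpen V := (isOpen_lt continuous_const continuous_re).inter Metric.isOpen_ball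
  have hzV : z ∈ V := ⟨half_lt_self hz, by simp⟩
  refine (DifferentiableOn.differentiableAt ?_ (hV.mem_nhds hzV)).differentiableWithinAt
  refine differentiableOn_tsum_of_summable_norm
    ((summable_rpow_succ_neg_sub_one (half_pos hz)).mul_left ((1 + (‖z‖ + 1)) * (‖z‖ + 1)))
    (fun n => (differentiable_zetaTerm n.succ_pos).differentiableOn) hV (fun n w hw => ?_)
  exact norm_zetaTerm_succ_le (by linarith [half_pos hz]) hw.1.le
    (by simpa using (mem_ball_zero_iff.1 hw.2).le) n

lemma sum_Icc_one_eq_sum_range {M : Type*} [AddCommMonoid M] (f : ℕ → M) (N : ℕ) :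
    ∑ n ∈ Icc 1 N, f n = ∑ n ∈ range N, f (n + 1) := by
  rw [← Finset.Ico_add_one_right_eq_Icc, Finset.sum_Ico_eq_sum_range, Nat.add_sub_cancel]
  simp only [add_comm 1]

lemma sum_Icc_zetaTerm (z : ℂ) (N : ℕ) :
    ∑ n ∈ Icc 1 N, zetaTerm z n
      = (1 - z) * ∑ n ∈ Icc 1 N, 1 / (n : ℂ) ^ z - (((N : ℂ) + 1) ^ (1 - z) - 1) := by
  have htel : ∑ n ∈ Icc 1 N, (((n : ℂ) + 1) ^ (1 - z) - (n : ℂ) ^ (1 - z))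
      = ((N : ℂ) + 1) ^ (1 - z) - 1 := by
    have h := sum_range_sub (fun k : ℕ => ((k + 1 : ℕ) : ℂ) ^ (1 - z)) N
    push_cast at h
    simpa [sum_Icc_one_eq_sum_range] using h
  simp only [zetaTerm, sum_sub_distrib, ← mul_sum, htel, cpow_neg, one_div]

lemma tendsto_sum_Icc_zetaTerm {z : ℂ} (hz : 0 < z.re) :
    Tendsto (fun N => ∑ n ∈ Icc 1 N, zetaTerm z n) atTop (𝓝 (∑' n, zetaTerm z (n + 1))) := by
  simpa only [sum_Icc_one_eq_sum_range] using (summable_zetaTerm hz).hasSum.tendsto_sum_nat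

lemma tendsto_sum_Icc_one_div_cpow {z : ℂ} (hz : 1 < z.re) :
    Tendsto (fun N : ℕ => ∑ n ∈ Icc 1 N, 1 / (n : ℂ) ^ z) atTop (𝓝 (riemannZeta z)) := by
  have h := ((summable_nat_add_iff 1).2 (summable_one_div_nat_cpow.2 hz)).hasSum.tendsto_sum_nat
  push_cast at h
  rw [← zeta_eq_tsum_one_div_nat_add_one_cpow hz] at h
  simpa only [sum_Icc_one_eq_sum_range, Nat.cast_add, Nat.cast_one] using h

lemma tendsto_natCast_add_one_cpow_nhds_zero {w : ℂ} (hw : w.re < 0) :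
    Tendsto (fun N : ℕ => ((N : ℂ) + 1) ^ w) atTop (𝓝 0) := by
  rw [tendsto_zero_iff_norm_tendsto_zero]
  have h := (tendsto_rpow_neg_atTop (neg_pos.2 hw)).comp
    (tendsto_atTop_add_const_right _ 1 tendsto_natCast_atTop_atTop)
  refine h.congr fun N => ?_
  rw [neg_neg, Function.comp_apply, ← norm_cpow_eq_rpow_re_of_pos (by positivity)]
  push_cast
  rfl

lemma tsum_zetaTerm_of_one_lt_re {z : ℂ} (hz : 1 < z.re) :
    ∑' n, zetaTerm z (n + 1) = (1 - z) * riemannZeta z + 1 := by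
  refine tendsto_nhds_unique (tendsto_sum_Icc_zetaTerm (by linarith)) ?_
  simp only [sum_Icc_zetaTerm]
  convert ((tendsto_sum_Icc_one_div_cpow hz).const_mul (1 - z)).sub
    ((tendsto_natCast_add_one_cpow_nhds_zero (w := 1 - z) (by simpa using hz)).sub_const 1) using 2
  ring

lemma tsum_zetaTerm {z : ℂ} (hz : 0 < z.re) : ∑' n, zetaTerm z (n + 1) = 1 - riemannZeta₁ z := by
  have hH : IsOpen {w : ℂ | 0 < w.re} := isOpen_lt continuous_const continuous_re
  have hF := differentiableOn_tsum_zetaTerm.analyticOnNhd hH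
  have hG : AnalyticOnNhd ℂ (fun w => 1 - riemannZeta₁ w) {w | 0 < w.re} :=
    (differentiable_riemannZeta₁.const_sub 1).differentiableOn.analyticOnNhd hH
  refine hF.eqOn_of_preconnected_of_eventuallyEq hG (convex_halfSpace_re_gt 0).isPreconnected
    (z₀ := 2) (by simp) ?_ hz
  filter_upwards [(isOpen_lt continuous_const continuous_re).mem_nhds
    (by simp : (1 : ℝ) < (2 : ℂ).re)] with w hw
  have hw1 : w ≠ 1 := fun h => by simp [h] at hw
  rw [tsum_zetaTerm_of_one_lt_re hw, riemannZeta_eq_inv_sub_mul hw1]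
  field_simp
  ring

lemma tendsto_sum_Icc_one_div_cpow_sub {z : ℂ} (hz : 0 < z.re) (hz1 : z ≠ 1) :
    Tendsto (fun N : ℕ => ∑ n ∈ Icc 1 N, 1 / (n : ℂ) ^ z - ((N : ℂ) + 1) ^ (1 - z) / (1 - z))
      atTop (𝓝 (riemannZeta z)) := by
  have h1z : 1 - z ≠ 0 := sub_ne_zero.2 hz1.symm
  have h := tendsto_sum_Icc_zetaTerm hz
  rw [tsum_zetaTerm hz] at h
  convert (h.sub_const 1).div_const (1 - z) using 1
  · ext N
    rw [sum_Icc_zetaTerm]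
    field_simp
    ring
  · rw [riemannZeta_eq_inv_sub_mul hz1, ← neg_sub z 1, div_neg, sub_sub_cancel_left, neg_div,
      neg_neg, div_eq_inv_mul]

lemma tendsto_sum_Icc_floor_one_div_cpow_sub {z : ℂ} (hz : 0 < z.re) (hz1 : z ≠ 1) :
    Tendsto (fun x : ℝ => ∑ n ∈ Icc 1 ⌊x⌋₊, 1 / (n : ℂ) ^ z - (x : ℂ) ^ (1 - z) / (1 - z))
      atTop (𝓝 (riemannZeta z)) := by
  have hrem : Tendsto (fun x : ℝ => ((⌊x⌋₊ + 1 : ℂ) ^ (1 - z) - (x : ℂ) ^ (1 - z)) / (1 - z))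
      atTop (𝓝 0) := by
    rw [← zero_div (1 - z)]
    refine Tendsto.div_const (squeeze_zero_norm' ?_
      ((tendsto_rpow_neg_atTop hz).const_mul ‖z - 1‖ |>.trans (by simp))) _
    filter_upwards [eventually_gt_atTop 0] with x hx
    have h := norm_ofReal_cpow_neg_sub_le (z := z - 1) (by rw [sub_re, one_re]; linarith) hx
      (Nat.lt_floor_add_one x).le
    rw [neg_sub, sub_re, one_re, show -(z.re - 1) - 1 = -z.re by ring] at h
    calc _ ≤ ‖z - 1‖ * x ^ (-z.re) * (⌊x⌋₊ + 1 - x) := by simpa using h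
      _ ≤ ‖z - 1‖ * x ^ (-z.re) := by
        have := Nat.floor_le hx.le
        nlinarith [mul_nonneg (norm_nonneg (z - 1)) (Real.rpow_nonneg hx.le (-z.re))]
  convert ((tendsto_sum_Icc_one_div_cpow_sub hz hz1).comp tendsto_nat_floor_atTop).add hrem
    using 2 with x
  · simp only [Function.comp_apply]
    ring
  · simp

lemma tendsto_sum_Icc_floor_one_div_rpow_sub {s : ℝ} (hs0 : 0 < s) (hs1 : s < 1) :
    Tendsto (fun x : ℝ => ∑ n ∈ Icc 1 ⌊x⌋₊, 1 / (n : ℝ) ^ s - x ^ (1 - s) / (1 - s))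
      atTop (𝓝 (riemannZeta s).re) := by
  have h := (continuous_re.tendsto _).comp (tendsto_sum_Icc_floor_one_div_cpow_sub (z := s)
    (by simpa using hs0) (by exact_mod_cast hs1.ne))
  refine h.congr' ?_
  filter_upwards [eventually_ge_atTop 0] with x hx
  rw [Function.comp_apply, ← ofReal_one, ← ofReal_sub, ← ofReal_cpow hx]
  simp_rw [← ofReal_natCast, ← ofReal_cpow (Nat.cast_nonneg _)]
  norm_cast

theorem stmt_18 (s : ℝ) (hs0 : 0 < s) (hs1 : s < 1) :
    Tendsto (fun m : ℕ =>
      (∑ n ∈ Finset.Icc 1 m, (1 : ℝ) / (n : ℝ) ^ s)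
        - ∑ k ∈ Finset.Icc (m + 1) ⌊(2 : ℝ) ^ (1 / (1 - s)) * m⌋₊,
            (1 : ℝ) / (k : ℝ) ^ s)
      atTop (nhds ((riemannZeta s).re)) := by
  set c : ℝ := (2 : ℝ) ^ (1 / (1 - s))
  have hc : 1 ≤ c := Real.one_le_rpow (by norm_num) (one_div_nonneg.2 (by linarith))
  have hc2 : c ^ (1 - s) = 2 := by
    rw [← Real.rpow_mul (by norm_num), one_div_mul_cancel (by linarith), Real.rpow_one]
  have hT := tendsto_sum_Icc_floor_one_div_rpow_sub hs0 hs1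
  have h := ((hT.comp tendsto_natCast_atTop_atTop).const_mul 2).sub
    (hT.comp (tendsto_natCast_atTop_atTop.const_mul_atTop (by linarith : 0 < c)))
  rw [two_mul, add_sub_cancel_right] at h
  refine h.congr fun m => ?_
  have hm : m ≤ ⌊c * m⌋₊ := Nat.le_floor (le_mul_of_one_le_left (Nat.cast_nonneg m) hc)
  have hsplit := sum_Ioc_consecutive (fun n : ℕ => 1 / (n : ℝ) ^ s) m.zero_le hm
  simp only [← Icc_add_one_left_eq_Ioc, zero_add] at hsplit
  simp only [Function.comp_apply, Nat.floor_natCast,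
    Real.mul_rpow (by linarith : 0 ≤ c) (Nat.cast_nonneg m), hc2]
  rw [← hsplit]
  ring
end
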